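/- Let 1/4 < H < 1 and let ρ be a real number satisfying: ρ < 4H-3 if 1/4 < H < 1/2, and ρ < 2(H-1) if 1/2 ≤ H < 1. Then the series ∑_{k ∈ ℤ²₀} |k|^{4ρ+4} · ( ∑_{h ∈ ℤ²₀, h ≠ k} 1/(|h|^{4H} |k-h|^{4H}) )² converges (is finite). -/

import Mathlib

/-!
Since `|h| + |k - h| ≥ |k|`, the larger of `|h|`, `|k - h|` is at least `|k| / 2`. Splitting off
its `c`-th power and using `xy ≤ x² + y²` bounds the inner sum by `C |k|^(-c)` as soon as
`∑ |h|^(-2(a - c))` converges, i.e. `c < a - 1`. The outer series is then dominated by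
`∑ |k|^(p - 2c)`, which converges once `c > p / 2 + 1`. For `a = 4H`, `p = 4ρ + 4` a suitable
`c ≥ 0` exists precisely when `H > 1/4` and `ρ < 2(H - 1)`.
-/

/-- Euclidean norm of an element of `ℤ²`. -/
noncomputable def znorm (k : ℤ × ℤ) : ℝ :=
  Real.sqrt ((k.1 : ℝ) ^ 2 + (k.2 : ℝ) ^ 2)

open Real

lemma znorm_nonneg (k : ℤ × ℤ) : 0 ≤ znorm k := sqrt_nonneg _

lemma znorm_zero : znorm 0 = 0 := by simp [znorm]

lemma one_le_znorm {k : ℤ × ℤ} (hk : k ≠ 0) : 1 ≤ znorm k := by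
  have hk' : k.1 ≠ 0 ∨ k.2 ≠ 0 := by
    by_contra! h
    exact hk (Prod.ext h.1 h.2)
  have h1 : (1 : ℤ) ≤ k.1 ^ 2 + k.2 ^ 2 := by
    rcases hk' with h | h <;> nlinarith [sq_pos_of_ne_zero h, sq_nonneg k.1, sq_nonneg k.2]
  rw [znorm, one_le_sqrt]
  exact_mod_cast h1

lemma znorm_eq_norm_complex (k : ℤ × ℤ) : znorm k = ‖(k.1 + k.2 * Complex.I : ℂ)‖ := by
  rw [← Complex.ofReal_intCast, ← Complex.ofReal_intCast, Complex.norm_add_mul_I]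
  rfl

lemma znorm_le_add_znorm_sub (k h : ℤ × ℤ) : znorm k ≤ znorm h + znorm (k - h) := by
  simp only [znorm_eq_norm_complex, Prod.fst_sub, Prod.snd_sub]
  refine le_of_eq_of_le ?_ (norm_add_le _ _)
  congr 1
  push_cast
  ring

lemma norm_finTwoArrow_symm_le_znorm (k : ℤ × ℤ) :
    ‖(LinearEquiv.finTwoArrow ℤ ℤ).symm k‖ ≤ znorm k := by
  refine (pi_norm_le_iff_of_nonneg (znorm_nonneg k)).2 fun i => ?_
  fin_cases i <;> simp only [LinearEquiv.finTwoArrow_symm_apply, Int.norm_eq_abs, Fin.zero_eta,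
    Fin.mk_one, Matrix.cons_val_zero, Matrix.cons_val_one] <;>
    exact abs_le_sqrt (by nlinarith [sq_nonneg (k.1 : ℝ), sq_nonneg (k.2 : ℝ)])

lemma summable_znorm_rpow_neg {s : ℝ} (hs : 2 < s) :
    Summable fun k : ℤ × ℤ => znorm k ^ (-s) := by
  let e := (LinearEquiv.finTwoArrow ℤ ℤ).symm
  have hsum : Summable fun k : ℤ × ℤ => ‖e k‖ ^ (-s) :=
    (EisensteinSeries.summable_one_div_norm_rpow hs).comp_injective e.injective
  refine hsum.of_nonneg_of_le (fun k => rpow_nonneg (znorm_nonneg k) _) fun k => ?_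
  rcases eq_or_ne k 0 with rfl | hk
  · simp [znorm_zero, zero_rpow (by linarith : -s ≠ 0)]
  · exact rpow_le_rpow_of_nonpos (norm_pos_iff.2 (e.map_ne_zero_iff.2 hk))
      (norm_finTwoArrow_symm_le_znorm k) (by linarith)

lemma rpow_neg_mul_rpow_neg_le {A B K a c : ℝ} (hA : 0 < A) (hB : 1 ≤ B) (hK : 0 < K)
    (hKA : K ≤ 2 * A) (hc : 0 ≤ c) :
    A ^ (-a) * B ^ (-a) ≤ (2 / K) ^ c * (A ^ (-(2 * (a - c))) + B ^ (-(2 * (a - c)))) := by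
  set X := A ^ (-(a - c))
  set Y := B ^ (-(a - c))
  have hsplit : A ^ (-a) = A ^ (-c) * X := by rw [← rpow_add hA]; ring_nf
  have hAc : A ^ (-c) ≤ (2 / K) ^ c := by
    rw [rpow_neg hA.le, ← inv_rpow hA.le]
    refine rpow_le_rpow (by positivity) ?_ hc
    rw [inv_eq_one_div, div_le_div_iff₀ hA hK]
    linarith
  have hBY : B ^ (-a) ≤ Y := rpow_le_rpow_of_exponent_le hB (by linarith)
  have hsq : ∀ x : ℝ, 0 < x → x ^ (-(2 * (a - c))) = (x ^ (-(a - c))) ^ 2 := fun x hx => by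
    rw [← rpow_mul_natCast hx.le]
    ring_nf
  have hX : 0 ≤ X := rpow_nonneg hA.le _
  have hY : 0 ≤ Y := rpow_nonneg (by linarith) _
  rw [hsplit, hsq A hA, hsq B (by linarith)]
  calc A ^ (-c) * X * B ^ (-a) ≤ (2 / K) ^ c * (X * Y) := by
        rw [mul_assoc]
        gcongr
    _ ≤ (2 / K) ^ c * (X ^ 2 + Y ^ 2) := by
        gcongr
        nlinarith [sq_nonneg (X - Y)]

lemma tsum_one_div_znorm_rpow_mul_le {a c : ℝ} (hc : 0 ≤ c) (hca : c < a - 1) {k : ℤ × ℤ}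
    (hk : k ≠ 0) :
    ∑' h : {h : ℤ × ℤ // h ≠ 0 ∧ h ≠ k}, 1 / (znorm h.1 ^ a * znorm (k - h.1) ^ a) ≤
      (2 / znorm k) ^ c * (2 * ∑' h : ℤ × ℤ, znorm h ^ (-(2 * (a - c)))) := by
  set s := 2 * (a - c)
  have hg := summable_znorm_rpow_neg (s := s) (by linarith)
  have hg' : Summable fun h : ℤ × ℤ => znorm (k - h) ^ (-s) :=
    (Equiv.subLeft k).summable_iff.2 hg
  set G : ℤ × ℤ → ℝ := fun h => (2 / znorm k) ^ c * (znorm h ^ (-s) + znorm (k - h) ^ (-s))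
  have hG : Summable G := (hg.add hg').mul_left _
  have hG0 : ∀ h, 0 ≤ G h := fun h => by
    have := znorm_nonneg k; have := znorm_nonneg h; have := znorm_nonneg (k - h)
    positivity
  have hK : 0 < znorm k := zero_lt_one.trans_le (one_le_znorm hk)
  have hle : ∀ h : {h : ℤ × ℤ // h ≠ 0 ∧ h ≠ k},
      1 / (znorm h.1 ^ a * znorm (k - h.1) ^ a) ≤ G h := by
    rintro ⟨h, h0, hhk⟩
    have hA := one_le_znorm h0
    have hB := one_le_znorm (sub_ne_zero.2 hhk.symm)
    have htri := znorm_le_add_znorm_sub k h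
    simp only [G]
    rw [one_div, mul_inv, ← rpow_neg (by linarith), ← rpow_neg (by linarith)]
    rcases le_total (znorm (k - h)) (znorm h) with hBA | hAB
    · exact rpow_neg_mul_rpow_neg_le (by linarith) hB hK (by linarith) hc
    · rw [mul_comm, add_comm]
      exact rpow_neg_mul_rpow_neg_le (by linarith) hA hK (by linarith) hc
  have hF : Summable fun h : {h : ℤ × ℤ // h ≠ 0 ∧ h ≠ k} =>
      1 / (znorm h.1 ^ a * znorm (k - h.1) ^ a) :=
    (hG.subtype _).of_nonneg_of_le
      (fun h => by have := znorm_nonneg h.1; have := znorm_nonneg (k - h.1); positivity) hle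
  calc _ ≤ ∑' h : {h : ℤ × ℤ // h ≠ 0 ∧ h ≠ k}, G h :=
        hF.tsum_le_tsum hle (hG.subtype _)
    _ ≤ ∑' h, G h := hG.tsum_subtype_le G _ hG0
    _ = _ := by
        have hshift := (Equiv.subLeft k).tsum_eq fun h => znorm h ^ (-s)
        simp only [Equiv.subLeft_apply] at hshift
        rw [tsum_mul_left, hg.tsum_add hg', hshift, two_mul]

theorem summable_znorm_rpow_mul_sq_tsum_one_div_znorm_rpow_mul {a p : ℝ} (ha : 1 < a)
    (hp : p < 2 * a - 4) :
    Summable fun k : {k : ℤ × ℤ // k ≠ 0} => znorm k.1 ^ p *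
      (∑' h : {h : ℤ × ℤ // h ≠ 0 ∧ h ≠ k.1},
        1 / (znorm h.1 ^ a * znorm (k.1 - h.1) ^ a)) ^ 2 := by
  obtain ⟨c, hc0, hpc, hca⟩ : ∃ c : ℝ, 0 ≤ c ∧ p + 2 < 2 * c ∧ c < a - 1 := by
    have hmax : max (p / 2 + 1) 0 < a - 1 := max_lt (by linarith) (by linarith)
    refine ⟨(max (p / 2 + 1) 0 + (a - 1)) / 2, ?_, ?_, ?_⟩ <;>
      linarith [le_max_left (p / 2 + 1) 0, le_max_right (p / 2 + 1) 0]
  set S := ∑' h : ℤ × ℤ, znorm h ^ (-(2 * (a - c)))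
  refine ((((summable_znorm_rpow_neg (s := 2 * c - p) (by linarith)).subtype _).mul_left
    ((2 ^ c * (2 * S)) ^ 2)).of_nonneg_of_le (fun k => ?_) fun ⟨k, hk⟩ => ?_)
  · have := znorm_nonneg k.1
    positivity
  have hK := zero_lt_one.trans_le (one_le_znorm hk)
  calc _ ≤ znorm k ^ p * ((2 / znorm k) ^ c * (2 * S)) ^ 2 := by
        gcongr
        · exact tsum_nonneg fun h => by
            have := znorm_nonneg h.1; have := znorm_nonneg (k - h.1); positivity
        · exact tsum_one_div_znorm_rpow_mul_le hc0 hca hk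
    _ = _ := by
        rw [Function.comp_apply, div_rpow (by norm_num) hK.le,
          show -(2 * c - p) = p - c * (2 : ℕ) by push_cast; ring, rpow_sub hK,
          rpow_mul_natCast hK.le]
        field_simp

theorem statement_11 (H ρ : ℝ) (hH1 : 1 / 4 < H) (hH2 : H < 1)
    (hρ1 : 1 / 4 < H → H < 1 / 2 → ρ < 4 * H - 3)
    (hρ2 : 1 / 2 ≤ H → H < 1 → ρ < 2 * (H - 1)) :
    Summable (fun k : {k : ℤ × ℤ // k ≠ 0} =>
      znorm k.1 ^ (4 * ρ + 4) *
        (∑' h : {h : ℤ × ℤ // h ≠ 0 ∧ h ≠ k.1},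
            1 / (znorm h.1 ^ (4 * H) * znorm (k.1 - h.1) ^ (4 * H))) ^ 2) := by
  have hρ : ρ < 2 * (H - 1) := by
    rcases lt_or_ge H (1 / 2) with h | h
    · linarith [hρ1 hH1 h]
    · exact hρ2 h hH2
  exact summable_znorm_rpow_mul_sq_tsum_one_div_znorm_rpow_mul (by linarith) (by linarith)
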